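/- arXiv:1502.00609 — 4 statements merged into one kernel-verified Lean document; each statement's English description precedes it below -/
import Mathlib

section
/- The (m+4)-dimensional algebra L with basis {e,f,h,x_0,...,x_m} (m ≥ 2) and nonzero products [x_k,e] = -k(m+1-k)x_{k-1} (1 ≤ k ≤ m), [x_k,f] = x_{k+1} (0 ≤ k ≤ m-1), [x_k,h] = (m-2k)x_k (0 ≤ k ≤ m), [e,h] = 2e, [h,e] = -2e, [h,f] = 2f, [f,h] = -2f, [e,f] = h, [f,e] = -h, is a Leibniz algebra, i.e., it satisfies [x,[y,z]] = [[x,y],z] - [[x,z],y]. -/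
open Finset

/-- Basis index type: `Sum.inl 0 = e`, `Sum.inl 1 = f`, `Sum.inl 2 = h`,
`Sum.inr k = x_k`. -/
abbrev BasisIdx (m : ℕ) : Type := Fin 3 ⊕ Fin (m + 1)

/-- The underlying vector space of the `(m+4)`-dimensional algebra. -/
def Lm (m : ℕ) : Type := BasisIdx m → ℂ

noncomputable instance (m : ℕ) : AddCommGroup (Lm m) := Pi.addCommGroup
noncomputable instance (m : ℕ) : Module ℂ (Lm m) := Pi.module _ _ _
instance (m : ℕ) : FiniteDimensional ℂ (Lm m) := Module.Finite.pi (ι := BasisIdx m)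

/-- The basis vectors. -/
noncomputable def bas (m : ℕ) (i : BasisIdx m) : Lm m := Pi.single i 1

/-- Structure constants of the simple Leibniz algebra with associated Lie algebra
`sl₂`:  `[x_k,e] = -k(m+1-k)x_{k-1}`, `[x_k,f] = x_{k+1}`, `[x_k,h] = (m-2k)x_k`,
`[e,h] = 2e = -[h,e]`, `[h,f] = 2f = -[f,h]`, `[e,f] = h = -[f,e]`,
all other products of basis vectors being zero. -/
noncomputable def sc (m : ℕ) : BasisIdx m → BasisIdx m → Lm m
  | Sum.inr k, Sum.inl ⟨0, _⟩ =>
      (-((k : ℂ) * ((m : ℂ) + 1 - (k : ℂ)))) •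
        bas m (Sum.inr ⟨(k : ℕ) - 1, Nat.lt_of_le_of_lt (Nat.sub_le _ _) k.isLt⟩)
  | Sum.inr k, Sum.inl ⟨1, _⟩ =>
      if h : (k : ℕ) < m then bas m (Sum.inr ⟨(k : ℕ) + 1, by omega⟩) else 0
  | Sum.inr k, Sum.inl ⟨2, _⟩ => ((m : ℂ) - 2 * (k : ℂ)) • bas m (Sum.inr k)
  | Sum.inl ⟨0, _⟩, Sum.inl ⟨2, _⟩ => (2 : ℂ) • bas m (Sum.inl 0)
  | Sum.inl ⟨2, _⟩, Sum.inl ⟨0, _⟩ => (-2 : ℂ) • bas m (Sum.inl 0)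
  | Sum.inl ⟨2, _⟩, Sum.inl ⟨1, _⟩ => (2 : ℂ) • bas m (Sum.inl 1)
  | Sum.inl ⟨1, _⟩, Sum.inl ⟨2, _⟩ => (-2 : ℂ) • bas m (Sum.inl 1)
  | Sum.inl ⟨0, _⟩, Sum.inl ⟨1, _⟩ => bas m (Sum.inl 2)
  | Sum.inl ⟨1, _⟩, Sum.inl ⟨0, _⟩ => -bas m (Sum.inl 2)
  | _, _ => 0

/-- The bilinear bracket of the algebra, extended from the structure constants. -/
noncomputable def br (m : ℕ) (x y : Lm m) : Lm m :=
  ∑ i : BasisIdx m, ∑ j : BasisIdx m, (x i * y j) • sc m i j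

/-! The identity is trilinear, so it suffices to check it on basis vectors. On `e, f, h` it is
the Jacobi identity of `sl₂`. Right multiplication by any `x_k` is zero, and `[x_k, w]` always
lies in the span of the `x_k`, so every triple with an `x_k` in the second or third slot is
trivial. What is left, `[x_k, [b, c]] = [[x_k, b], c] - [[x_k, c], b]` for `b, c ∈ {e, f, h}`,
says that `x₀, …, x_m` span a right `sl₂`-module: the irreducible one of dimension `m + 1`. -/

theorem LinearMap.leibniz_of_basis {ι R M : Type*} [CommRing R] [AddCommGroup M] [Module R M]
    (B : M →ₗ[R] M →ₗ[R] M) (b : Module.Basis ι R M)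
    (h : ∀ i j k, B (b i) (B (b j) (b k)) = B (B (b i) (b j)) (b k) - B (B (b i) (b k)) (b j))
    (x y z : M) : B x (B y z) = B (B x y) z - B (B x z) y := by
  have on_basis_left : ∀ i, B.compr₂ (B (b i)) = B ∘ₗ B (b i) - (B ∘ₗ B (b i)).flip := fun i =>
    LinearMap.ext_basis b b fun j k => h i j k
  -- in terms of right multiplications `R a = B.flip a`: `R (B y z) = R z ∘ R y - R y ∘ R z`
  have : B.flip (B y z) = B.flip z ∘ₗ B.flip y - B.flip y ∘ₗ B.flip z :=
    b.ext fun i => congr($(on_basis_left i) y z)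
  exact congr($this x)

namespace Lm

variable {m : ℕ}

theorem add_apply (u v : Lm m) (i : BasisIdx m) : (u + v) i = u i + v i := rfl

theorem smul_apply (c : ℂ) (v : Lm m) (i : BasisIdx m) : (c • v) i = c * v i := rfl

noncomputable def basis (m : ℕ) : Module.Basis (BasisIdx m) ℂ (Lm m) := Pi.basisFun ℂ (BasisIdx m)

theorem basis_apply (i : BasisIdx m) : basis m i = bas m i := Pi.basisFun_apply ℂ _ i

end Lm

noncomputable def brₗ (m : ℕ) : Lm m →ₗ[ℂ] Lm m →ₗ[ℂ] Lm m :=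
  LinearMap.mk₂ ℂ (br m)
    (fun x x' y => by simp only [br, Lm.add_apply, add_mul, add_smul, sum_add_distrib])
    (fun c x y => by simp only [br, Lm.smul_apply, smul_sum, smul_smul, mul_assoc])
    (fun x y y' => by simp only [br, Lm.add_apply, mul_add, add_smul, sum_add_distrib])
    (fun c x y => by simp only [br, Lm.smul_apply, smul_sum, smul_smul, mul_left_comm])

section

variable {m : ℕ}

theorem brₗ_apply (x y : Lm m) : brₗ m x y = br m x y := rfl

theorem brₗ_bas_bas (a b : BasisIdx m) : brₗ m (bas m a) (bas m b) = sc m a b := by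
  rw [brₗ_apply]
  simp [br, bas, Pi.single_apply, mul_ite]

@[simp] theorem sc_self (i : BasisIdx m) : sc m i i = 0 := by
  rcases i with ⟨_ | _ | _ | _, _⟩ | _ <;> rfl

@[simp] theorem sc_inr_right (l : BasisIdx m) (q : Fin (m + 1)) : sc m l (Sum.inr q) = 0 := by
  rcases l with ⟨_ | _ | _ | _, _⟩ | _ <;> rfl

@[simp] theorem sc_e_f : sc m (Sum.inl 0) (Sum.inl 1) = bas m (Sum.inl 2) := rfl
@[simp] theorem sc_f_e : sc m (Sum.inl 1) (Sum.inl 0) = -bas m (Sum.inl 2) := rfl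
@[simp] theorem sc_e_h : sc m (Sum.inl 0) (Sum.inl 2) = (2 : ℂ) • bas m (Sum.inl 0) := rfl
@[simp] theorem sc_h_e : sc m (Sum.inl 2) (Sum.inl 0) = (-2 : ℂ) • bas m (Sum.inl 0) := rfl
@[simp] theorem sc_f_h : sc m (Sum.inl 1) (Sum.inl 2) = (-2 : ℂ) • bas m (Sum.inl 1) := rfl
@[simp] theorem sc_h_f : sc m (Sum.inl 2) (Sum.inl 1) = (2 : ℂ) • bas m (Sum.inl 1) := rfl

/-- `x_k`, extended by `0` for `k > m`, so that the action of `e`, `f`, `h` on it is given by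
one formula for every `k : ℕ`. -/
noncomputable def xvec (m k : ℕ) : Lm m :=
  if hk : k ≤ m then bas m (Sum.inr ⟨k, Nat.lt_succ_of_le hk⟩) else 0

theorem bas_inr (q : Fin (m + 1)) : bas m (Sum.inr q) = xvec m q := by
  simp [xvec, Nat.le_of_lt_succ q.isLt]

@[simp] theorem brₗ_xvec_e (k : ℕ) :
    brₗ m (xvec m k) (bas m (Sum.inl 0)) = (-(k * (m + 1 - k) : ℂ)) • xvec m (k - 1) := by
  unfold xvec
  split_ifs
  · rw [brₗ_bas_bas]; rfl
  · omega
  · obtain rfl : k = m + 1 := by omega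
    push_cast; simp
  · simp

@[simp] theorem brₗ_xvec_f (k : ℕ) : brₗ m (xvec m k) (bas m (Sum.inl 1)) = xvec m (k + 1) := by
  unfold xvec
  split_ifs with hk hk'
  · rw [brₗ_bas_bas]; exact dif_pos (by simpa using hk' : k < m)
  · rw [brₗ_bas_bas]; exact dif_neg (by simpa using hk' : ¬ k < m)
  · omega
  · simp

@[simp] theorem brₗ_xvec_h (k : ℕ) :
    brₗ m (xvec m k) (bas m (Sum.inl 2)) = ((m : ℂ) - 2 * k) • xvec m k := by
  unfold xvec
  split_ifs
  · rw [brₗ_bas_bas]; rfl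
  · simp

@[simp] theorem brₗ_xvec_right (v : Lm m) (k : ℕ) : brₗ m v (xvec m k) = 0 := by
  unfold xvec
  split_ifs
  · rw [brₗ_apply]
    simp [br, bas, Pi.single_apply]
  · exact map_zero _

theorem brₗ_sl2_leibniz (a b c : Fin 3) :
    brₗ m (bas m (Sum.inl a)) (brₗ m (bas m (Sum.inl b)) (bas m (Sum.inl c))) =
      brₗ m (brₗ m (bas m (Sum.inl a)) (bas m (Sum.inl b))) (bas m (Sum.inl c)) -
        brₗ m (brₗ m (bas m (Sum.inl a)) (bas m (Sum.inl c))) (bas m (Sum.inl b)) := by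
  fin_cases a <;> fin_cases b <;> fin_cases c <;> simp [brₗ_bas_bas]

theorem brₗ_xvec_leibniz (k : ℕ) (b c : Fin 3) :
    brₗ m (xvec m k) (brₗ m (bas m (Sum.inl b)) (bas m (Sum.inl c))) =
      brₗ m (brₗ m (xvec m k) (bas m (Sum.inl b))) (bas m (Sum.inl c)) -
        brₗ m (brₗ m (xvec m k) (bas m (Sum.inl c))) (bas m (Sum.inl b)) := by
  rcases k with _ | k <;> fin_cases b <;> fin_cases c <;>
    simp only [Fin.zero_eta, Fin.mk_one, Fin.reduceFinMk, Fin.isValue, brₗ_bas_bas, sc_self,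
      sc_e_f, sc_f_e, sc_e_h, sc_h_e, sc_f_h, sc_h_f, map_zero, map_neg, map_smul,
      LinearMap.smul_apply, brₗ_xvec_e, brₗ_xvec_f, brₗ_xvec_h, zero_tsub, Nat.add_sub_cancel,
      Nat.cast_zero, Nat.cast_add, Nat.cast_one] <;>
    module

theorem brₗ_brₗ_xvec_eq_zero (v w : Lm m) (k : ℕ) : brₗ m v (brₗ m (xvec m k) w) = 0 := by
  have : brₗ m v ∘ₗ brₗ m (xvec m k) = 0 := (Lm.basis m).ext fun j => by
    rcases j with c | r
    · fin_cases c <;> simp [Lm.basis_apply]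
    · simp [Lm.basis_apply, bas_inr]
  exact congr($this w)

theorem brₗ_bas_leibniz (i j k : BasisIdx m) :
    brₗ m (bas m i) (brₗ m (bas m j) (bas m k)) =
      brₗ m (brₗ m (bas m i) (bas m j)) (bas m k) - brₗ m (brₗ m (bas m i) (bas m k)) (bas m j) := by
  rcases k with c | r
  · rcases j with b | q
    · rcases i with a | p
      · exact brₗ_sl2_leibniz a b c
      · rw [bas_inr]
        exact brₗ_xvec_leibniz p b c
    · simp [bas_inr, brₗ_brₗ_xvec_eq_zero]
  · simp [bas_inr]

end

theorem stmt5_general (m : ℕ) :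
    ∀ x y z : Lm m, br m x (br m y z) = br m (br m x y) z - br m (br m x z) y :=
  (brₗ m).leibniz_of_basis (Lm.basis m) fun i j k => by
    simpa only [Lm.basis_apply] using brₗ_bas_leibniz i j k

/-- The `(m+4)`-dimensional algebra with the multiplication table of Theorem 2.3 is a
(right) Leibniz algebra: `[x,[y,z]] = [[x,y],z] - [[x,z],y]`. -/
theorem stmt5 (m : ℕ) (hm : 2 ≤ m) :
    ∀ x y z : Lm m, br m x (br m y z) = br m (br m x y) z - br m (br m x z) y :=
  stmt5_general m
end

section
/- Let L = G ∔ I be a semisimple Leibniz algebra (G a semisimple Lie subalgebra, I the abelian ideal of squares, with [G,G]=G, [I,G]=I, [G,I]=0, [I,I]=0), graded by L_0 = G, L_1 = I. Then the homogeneous component ZL^2_{(-2)} of degree -2 Leibniz 2-cocycles (valued in L) vanishes, so ZL^2(L,L) = ZL^2_{(-1)} ⊕ ZL^2_{(0)} ⊕ ZL^2_{(1)}. -/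
/-!
For `g ∈ G` and `y, z ∈ I`, every term of the cocycle identity at `(g, y, z)` except
`[g, φ(y, z)]` vanishes, because `φ(g, ·) = 0` and `[G, I] = 0`. Hence `φ(y, z) ∈ G` is
central in `G`, so it is zero; together with the other degree conditions, `φ` vanishes on
all four blocks of `L = G ⊕ I`.
-/

theorem LinearMap.eq_zero_of_isCompl {R L N : Type*} [CommSemiring R] [AddCommMonoid L]
    [Module R L] [AddCommMonoid N] [Module R N] {G I : Submodule R L} (hcompl : IsCompl G I)
    {φ : L →ₗ[R] L →ₗ[R] N} (hG : ∀ a ∈ G, ∀ b, φ a b = 0) (hIG : ∀ a ∈ I, ∀ b ∈ G, φ a b = 0)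
    (hII : ∀ a ∈ I, ∀ b ∈ I, φ a b = 0) : φ = 0 := by
  ext u v
  obtain ⟨a, b, ha, hb, rfl⟩ := Submodule.codisjoint_iff_exists_add_eq.mp hcompl.codisjoint u
  obtain ⟨c, d, hc, hd, rfl⟩ := Submodule.codisjoint_iff_exists_add_eq.mp hcompl.codisjoint v
  simp [hG a ha, hIG b hb c hc, hII b hb d hd]

theorem bracket_cocycle_eq_zero {R L : Type*} [CommRing R] [AddCommGroup L] [Module R L]
    {br φ : L →ₗ[R] L →ₗ[R] L}
    (hcoc : ∀ x y z : L,
      br x (φ y z) - br (φ x y) z + br (φ x z) y +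
        φ x (br y z) - φ (br x y) z + φ (br x z) y = 0)
    {x y z : L} (hx : ∀ b, φ x b = 0) (hxy : br x y = 0) (hxz : br x z = 0) :
    br x (φ y z) = 0 := by
  simpa [hx, hxy, hxz] using hcoc x y z

theorem stmt8_general {F L : Type*} [Field F] [AddCommGroup L] [Module F L]
    (br : L →ₗ[F] L →ₗ[F] L)
    (G I : Submodule F L) (hcompl : IsCompl G I)
    -- `[G,I] = 0`
    (hGI : ∀ a ∈ G, ∀ b ∈ I, br a b = 0)
    -- the semisimple Lie algebra `G` has trivial centre
    (hcent : ∀ c ∈ G, (∀ g ∈ G, br g c = 0) → c = 0)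
    (φ : L →ₗ[F] L →ₗ[F] L)
    (hcoc : ∀ x y z : L,
      br x (φ y z) - br (φ x y) z + br (φ x z) y +
        φ x (br y z) - φ (br x y) z + φ (br x z) y = 0)
    -- `φ` has degree `-2`: it vanishes except possibly on `I ⊗ I`…
    (hdeg₁ : ∀ a ∈ G, ∀ b : L, φ a b = 0)
    (hdeg₂ : ∀ a ∈ I, ∀ b ∈ G, φ a b = 0)
    -- …where it takes values in `G`
    (hdeg₃ : ∀ a ∈ I, ∀ b ∈ I, φ a b ∈ G) :
    φ = 0 := by
  have hII : ∀ y ∈ I, ∀ z ∈ I, φ y z = 0 := fun y hy z hz =>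
    hcent _ (hdeg₃ y hy z hz) fun g hg =>
      bracket_cocycle_eq_zero hcoc (hdeg₁ g hg) (hGI g hg y hy) (hGI g hg z hz)
  exact LinearMap.eq_zero_of_isCompl hcompl hdeg₁ hdeg₂ hII

/-- For a semisimple Leibniz algebra `L = G ∔ I` (graded by `L₀ = G`, `L₁ = I`), every
Leibniz 2-cocycle of degree `-2` (i.e. vanishing except possibly on `I ⊗ I`, where it
takes values in `G`) is zero; hence `ZL² = ZL²₍₋₁₎ ⊕ ZL²₍₀₎ ⊕ ZL²₍₁₎`. -/
theorem stmt8 {F L : Type*} [Field F] [AddCommGroup L] [Module F L]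
    (br : L →ₗ[F] L →ₗ[F] L)
    (leib : ∀ x y z : L, br x (br y z) = br (br x y) z - br (br x z) y)
    (G I : Submodule F L) (hcompl : IsCompl G I)
    -- `[G,G] = G`
    (hGG : Submodule.span F {u : L | ∃ a ∈ G, ∃ b ∈ G, u = br a b} = G)
    -- `[I,G] = I`
    (hIG : Submodule.span F {u : L | ∃ a ∈ I, ∃ b ∈ G, u = br a b} = I)
    -- `[G,I] = 0`
    (hGI : ∀ a ∈ G, ∀ b ∈ I, br a b = 0)
    -- `[I,I] = 0`
    (hII : ∀ a ∈ I, ∀ b ∈ I, br a b = 0)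
    -- the semisimple Lie algebra `G` has trivial centre
    (hcent : ∀ c ∈ G, (∀ g ∈ G, br g c = 0) → c = 0)
    (φ : L →ₗ[F] L →ₗ[F] L)
    (hcoc : ∀ x y z : L,
      br x (φ y z) - br (φ x y) z + br (φ x z) y +
        φ x (br y z) - φ (br x y) z + φ (br x z) y = 0)
    -- `φ` has degree `-2`: it vanishes except possibly on `I ⊗ I`…
    (hdeg₁ : ∀ a ∈ G, ∀ b : L, φ a b = 0)
    (hdeg₂ : ∀ a ∈ I, ∀ b ∈ G, φ a b = 0)
    -- …where it takes values in `G`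
    (hdeg₃ : ∀ a ∈ I, ∀ b ∈ I, φ a b ∈ G) :
    φ = 0 :=
  stmt8_general br G I hcompl hGI hcent φ hcoc hdeg₁ hdeg₂ hdeg₃
end

section
/- Let L = G ∔ I be a semisimple Leibniz algebra with [I,G] = I and [G,I] = 0. If φ is a Leibniz 2-cocycle of L with values in L of degree 0 mapping G ⊗ I → I (i.e., φ vanishes on G⊗G, I⊗G, I⊗I), then φ = 0. -/
/-!
Evaluating the cocycle identity on `(g, h, i) ∈ G × G × I` shows that right multiplication
by `h ∈ G` intertwines `φ(g, ·)` and `φ([g, h], ·)` on `I`. Feeding this into the identity on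
`(g, a, b) ∈ G × I × G` makes `φ(g, [a, b])` vanish, and the brackets `[a, b]` span `I`.
-/

section LeibnizCocycle

variable {R L : Type*} [CommRing R] [AddCommGroup L] [Module R L]

def IsLeibnizTwoCocycle (br φ : L →ₗ[R] L →ₗ[R] L) : Prop :=
  ∀ x y z : L,
    br x (φ y z) - br (φ x y) z + br (φ x z) y + φ x (br y z) - φ (br x y) z + φ (br x z) y = 0

namespace IsLeibnizTwoCocycle

variable {br φ : L →ₗ[R] L →ₗ[R] L} {G I : Submodule R L}

theorem bracket_apply_eq_apply_bracket (hφ : IsLeibnizTwoCocycle br φ)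
    (hGI : ∀ a ∈ G, ∀ b ∈ I, br a b = 0) (hφG : ∀ a ∈ G, ∀ b ∈ G, φ a b = 0)
    (hval : ∀ a ∈ G, ∀ b ∈ I, φ a b ∈ I) {g h i : L} (hg : g ∈ G) (hh : h ∈ G) (hi : i ∈ I) :
    br (φ g i) h = φ (br g h) i := by
  have H := hφ g h i
  rw [hGI g hg _ (hval h hh i hi), hφG g hg h hh, hGI h hh i hi, hGI g hg i hi] at H
  simpa [sub_eq_zero] using H

theorem apply_bracket_eq_zero (hφ : IsLeibnizTwoCocycle br φ)
    (hGI : ∀ a ∈ G, ∀ b ∈ I, br a b = 0) (hφG : ∀ a ∈ G, ∀ b ∈ G, φ a b = 0)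
    (hφI : ∀ a ∈ I, ∀ b : L, φ a b = 0) (hval : ∀ a ∈ G, ∀ b ∈ I, φ a b ∈ I)
    {g a b : L} (hg : g ∈ G) (ha : a ∈ I) (hb : b ∈ G) :
    φ g (br a b) = 0 := by
  have H := hφ g a b
  rw [hφI a ha b, hφG g hg b hb, hφ.bracket_apply_eq_apply_bracket hGI hφG hval hg hb ha,
    hGI g hg a ha] at H
  simpa using H

theorem apply_eq_zero_of_span_bracket (hφ : IsLeibnizTwoCocycle br φ)
    (hIG : Submodule.span R {u : L | ∃ a ∈ I, ∃ b ∈ G, u = br a b} = I)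
    (hGI : ∀ a ∈ G, ∀ b ∈ I, br a b = 0) (hφG : ∀ a ∈ G, ∀ b ∈ G, φ a b = 0)
    (hφI : ∀ a ∈ I, ∀ b : L, φ a b = 0) (hval : ∀ a ∈ G, ∀ b ∈ I, φ a b ∈ I)
    {g i : L} (hg : g ∈ G) (hi : i ∈ I) :
    φ g i = 0 := by
  have hspan : Submodule.span R {u : L | ∃ a ∈ I, ∃ b ∈ G, u = br a b} ≤ LinearMap.ker (φ g) :=
    Submodule.span_le.mpr fun _ ⟨a, ha, b, hb, hu⟩ ↦
      hu ▸ hφ.apply_bracket_eq_zero hGI hφG hφI hval hg ha hb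
  exact hspan (hIG.symm ▸ hi)

end IsLeibnizTwoCocycle

end LeibnizCocycle

theorem stmt9_general {F L : Type*} [Field F] [AddCommGroup L] [Module F L]
    (br : L →ₗ[F] L →ₗ[F] L)
    (G I : Submodule F L) (hcompl : IsCompl G I)
    -- `[I,G] = I`
    (hIG : Submodule.span F {u : L | ∃ a ∈ I, ∃ b ∈ G, u = br a b} = I)
    -- `[G,I] = 0`
    (hGI : ∀ a ∈ G, ∀ b ∈ I, br a b = 0)
    (φ : L →ₗ[F] L →ₗ[F] L)
    (hcoc : ∀ x y z : L,
      br x (φ y z) - br (φ x y) z + br (φ x z) y +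
        φ x (br y z) - φ (br x y) z + φ (br x z) y = 0)
    -- `φ` is supported on `G ⊗ I`…
    (hsupp₁ : ∀ a ∈ G, ∀ b ∈ G, φ a b = 0)
    (hsupp₂ : ∀ a ∈ I, ∀ b : L, φ a b = 0)
    -- …with values in `I`
    (hval : ∀ a ∈ G, ∀ b ∈ I, φ a b ∈ I) :
    φ = 0 := by
  have hφ : IsLeibnizTwoCocycle br φ := hcoc
  refine LinearMap.ext_on_codisjoint hcompl.codisjoint (fun g hg ↦ ?_) fun a ha ↦ ?_
  · exact LinearMap.ext_on_codisjoint hcompl.codisjoint (fun h hh ↦ hsupp₁ g hg h hh)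
      fun i hi ↦ hφ.apply_eq_zero_of_span_bracket hIG hGI hsupp₁ hsupp₂ hval hg hi
  · exact LinearMap.ext fun b ↦ hsupp₂ a ha b

/-- For a semisimple Leibniz algebra `L = G ∔ I` with `[I,G] = I` and `[G,I] = 0`,
every degree-`0` Leibniz 2-cocycle supported on `G ⊗ I` with values in `I`
(i.e. vanishing on `G⊗G`, `I⊗G` and `I⊗I`) is zero: `Φ⁰_{G,I} = 0`. -/
theorem stmt9 {F L : Type*} [Field F] [AddCommGroup L] [Module F L]
    (br : L →ₗ[F] L →ₗ[F] L)
    (leib : ∀ x y z : L, br x (br y z) = br (br x y) z - br (br x z) y)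
    (G I : Submodule F L) (hcompl : IsCompl G I)
    (hGG : ∀ a ∈ G, ∀ b ∈ G, br a b ∈ G)
    -- `[I,G] = I`
    (hIG : Submodule.span F {u : L | ∃ a ∈ I, ∃ b ∈ G, u = br a b} = I)
    -- `[G,I] = 0`
    (hGI : ∀ a ∈ G, ∀ b ∈ I, br a b = 0)
    -- `[I,I] = 0`
    (hII : ∀ a ∈ I, ∀ b ∈ I, br a b = 0)
    (φ : L →ₗ[F] L →ₗ[F] L)
    (hcoc : ∀ x y z : L,
      br x (φ y z) - br (φ x y) z + br (φ x z) y +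
        φ x (br y z) - φ (br x y) z + φ (br x z) y = 0)
    -- `φ` is supported on `G ⊗ I`…
    (hsupp₁ : ∀ a ∈ G, ∀ b ∈ G, φ a b = 0)
    (hsupp₂ : ∀ a ∈ I, ∀ b : L, φ a b = 0)
    -- …with values in `I`
    (hval : ∀ a ∈ G, ∀ b ∈ I, φ a b ∈ I) :
    φ = 0 :=
  stmt9_general br G I hcompl hIG hGI φ hcoc hsupp₁ hsupp₂ hval
end

section
/- Let L = G ∔ I be a semisimple Leibniz algebra. Every Leibniz 2-cocycle φ_0 : G ⊗ G → G (a degree-0 cocycle supported on G⊗G) is alternating: φ_0(y,y) = 0 for all y ∈ G, hence φ_0(x,y) = -φ_0(y,x), and φ_0 is a Lie 2-cocycle of G with coefficients in the adjoint module G. -/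
/-- For a semisimple Leibniz algebra `L = G ∔ I`, every degree-`0` Leibniz 2-cocycle
`φ₀` supported on `G ⊗ G` with values in `G` is alternating, hence skew-symmetric,
and therefore is a Lie 2-cocycle of `G` with coefficients in the adjoint module. -/
theorem stmt10 {F L : Type*} [Field F] [AddCommGroup L] [Module F L]
    (br : L →ₗ[F] L →ₗ[F] L)
    (leib : ∀ x y z : L, br x (br y z) = br (br x y) z - br (br x z) y)
    (G I : Submodule F L) (hcompl : IsCompl G I)
    (hGG : ∀ a ∈ G, ∀ b ∈ G, br a b ∈ G)
    (hIG : ∀ a ∈ I, ∀ b ∈ G, br a b ∈ I)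
    -- `[G,I] = 0` and `[I,I] = 0`
    (hGI : ∀ a ∈ G, ∀ b ∈ I, br a b = 0)
    (hII : ∀ a ∈ I, ∀ b ∈ I, br a b = 0)
    -- squares lie in `I` (the associated Lie algebra structure on `G`)
    (hsq : ∀ y ∈ G, br y y ∈ I)
    -- the semisimple Lie algebra `G` has trivial centre
    (hcent : ∀ c ∈ G, (∀ g ∈ G, br g c = 0) → c = 0)
    (φ : L →ₗ[F] L →ₗ[F] L)
    (hcoc : ∀ x y z : L,
      br x (φ y z) - br (φ x y) z + br (φ x z) y +
        φ x (br y z) - φ (br x y) z + φ (br x z) y = 0)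
    -- `φ` is supported on `G ⊗ G`…
    (hsupp₁ : ∀ a : L, ∀ b ∈ I, φ a b = 0)
    (hsupp₂ : ∀ a ∈ I, ∀ b : L, φ a b = 0)
    -- …with values in `G`
    (hval : ∀ a ∈ G, ∀ b ∈ G, φ a b ∈ G) :
    (∀ y ∈ G, φ y y = 0) ∧ (∀ x ∈ G, ∀ y ∈ G, φ x y = -φ y x) ∧
      -- `φ` is a Lie 2-cocycle of `G` with adjoint coefficients
      (∀ x ∈ G, ∀ y ∈ G, ∀ z ∈ G,
        br x (φ y z) - br (φ x y) z + br (φ x z) y +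
          φ x (br y z) - φ (br x y) z + φ (br x z) y = 0) := by
  have halt : ∀ y ∈ G, φ y y = 0 := by
    intro y hy
    apply hcent _ (hval y hy y hy)
    intro g hg
    have h := hcoc g y y
    have h1 : φ g (br y y) = 0 := hsupp₁ g _ (hsq y hy)
    rw [h1] at h
    simpa using h
  refine ⟨halt, ?_, ?_⟩
  · intro x hx y hy
    have h := halt (x + y) (G.add_mem hx hy)
    simp only [map_add, LinearMap.add_apply] at h
    rw [halt x hx, halt y hy] at h
    have h' : φ y x + φ x y = 0 := by simpa using h
    exact eq_neg_of_add_eq_zero_right h'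
  · intro x _ y _ z _
    exact hcoc x y z
end
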